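/- arXiv:2007.13599 — 11 statements merged into one kernel-verified Lean document; each statement's English description precedes it below -/
import Mathlib

section
/- Let p_1,…,p_n and q_1,…,q_n be real numbers with q_k > 0 for all k. Then every complex zero of the function f(x) = Σ_{k=1}^n q_k/(x² − p_k²) (defined where no denominator vanishes) is real. -/
/-- Every complex zero of `f(x) = Σ q_k / (x² − p_k²)` with real `p_k` and `q_k > 0`
is real. -/
theorem stmt0 (n : ℕ) (hn : 0 < n) (p q : Fin n → ℝ) (hq : ∀ k, 0 < q k)
    (x : ℂ) (hx : ∀ k, x ^ 2 ≠ ((p k : ℂ)) ^ 2)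
    (hzero : ∑ k, (q k : ℂ) / (x ^ 2 - ((p k : ℂ)) ^ 2) = 0) :
    x.im = 0 := by
  by_contra him
  have hz : ∀ k, x ^ 2 - ((p k : ℂ)) ^ 2 ≠ 0 := fun k => sub_ne_zero.mpr (hx k)
  have hns : ∀ k, 0 < Complex.normSq (x ^ 2 - ((p k : ℂ)) ^ 2) := fun k =>
    Complex.normSq_pos.mpr (hz k)
  -- imaginary part
  have him_eq : ∑ k, -(q k * (x ^ 2).im) / Complex.normSq (x ^ 2 - ((p k : ℂ)) ^ 2) = 0 := by
    have := congrArg Complex.im hzero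
    simpa [Complex.im_sum, Complex.div_im, Complex.sub_im, Complex.sub_re,
      ← Complex.ofReal_pow, neg_div, mul_comm, mul_div_assoc] using this
  have hs : 0 < ∑ k, q k / Complex.normSq (x ^ 2 - ((p k : ℂ)) ^ 2) := by
    apply Finset.sum_pos
    · intro k _
      exact div_pos (hq k) (hns k)
    · exact Finset.univ_nonempty_iff.mpr ⟨⟨0, hn⟩⟩
  have him2 : (x ^ 2).im = 0 := by
    have : (x ^ 2).im * ∑ k, q k / Complex.normSq (x ^ 2 - ((p k : ℂ)) ^ 2) = 0 := by
      rw [Finset.mul_sum]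
      rw [← neg_eq_zero, ← Finset.sum_neg_distrib]
      rw [← him_eq]
      apply Finset.sum_congr rfl
      intro k _
      ring
    rcases mul_eq_zero.mp this with h | h
    · exact h
    · exact absurd h hs.ne'
  have hre : x.re = 0 := by
    have : 2 * x.re * x.im = 0 := by
      have := him2
      simp [pow_two, Complex.mul_im] at this
      linarith [this]
    rcases mul_eq_zero.mp this with h | h
    · rcases mul_eq_zero.mp h with h | h
      · norm_num at h
      · exact h
    · exact absurd h him
  -- real part
  have hre_eq : ∑ k, q k * ((x ^ 2).re - (p k) ^ 2) / Complex.normSq (x ^ 2 - ((p k : ℂ)) ^ 2) = 0 := by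
    have := congrArg Complex.re hzero
    simp [Complex.re_sum, Complex.div_re, Complex.sub_re, Complex.sub_im, him2,
      ← Complex.ofReal_pow] at this
    rw [← this]
    simp [Complex.ofReal_pow]
  have hneg : ∑ k, q k * ((x ^ 2).re - (p k) ^ 2) / Complex.normSq (x ^ 2 - ((p k : ℂ)) ^ 2) < 0 := by
    apply Finset.sum_neg
    · intro k _
      apply div_neg_of_neg_of_pos _ (hns k)
      apply mul_neg_of_pos_of_neg (hq k)
      have : (x ^ 2).re = -x.im ^ 2 := by
        simp [pow_two, Complex.mul_re, hre]
      rw [this]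
      nlinarith [sq_nonneg (p k), sq_nonneg x.im, sq_abs x.im, pow_pos (abs_pos.mpr him) 2]
    · exact Finset.univ_nonempty_iff.mpr ⟨⟨0, hn⟩⟩
  exact absurd hre_eq hneg.ne
end

section
/- With SZP(s) = Π_i(s−z_i)Π_i(−s−p_i) + Π_i(−s−z_i)Π_i(s−p_i) where p_i, z_i < 0 are real, the constant coefficient of SZP equals 2·Π_i p_i · Π_i z_i and the leading coefficient (of s^{2n}) equals 2(−1)^n. Consequently, if the roots of SZP are ±μ_1,…,±μ_n, then (μ_1 μ_2 ⋯ μ_n)² = Π_i p_i · Π_i z_i, i.e., |μ_1⋯μ_n| = √(p_1⋯p_n · z_1⋯z_n). -/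
open Polynomial

lemma prod_neg' {α : Type*} [CommRing α] (n : ℕ) (f : Fin n → α) :
    ∏ i, -f i = (-1) ^ n * ∏ i, f i := by
  have h : ∀ i : Fin n, -f i = (-1) * f i := fun i => by ring
  simp_rw [h, Finset.prod_mul_distrib, Finset.prod_const, Finset.card_univ, Fintype.card_fin]

/-- The constant coefficient of SZP is `2·Πp·Πz`, its leading coefficient (of `s^{2n}`)
is `2(−1)^n`, and if SZP factors with roots `±μ_i` then `(Πμ)² = Πp·Πz`. -/
theorem stmt4 (n : ℕ) (p z : Fin n → ℝ) (hp : ∀ i, p i < 0) (hz : ∀ i, z i < 0) :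
    let SZP : Polynomial ℝ :=
      (∏ i, (X - Polynomial.C (z i))) * (∏ i, (-X - Polynomial.C (p i))) +
        (∏ i, (-X - Polynomial.C (z i))) * (∏ i, (X - Polynomial.C (p i)))
    SZP.coeff 0 = 2 * (∏ i, p i) * (∏ i, z i) ∧
    SZP.coeff (2 * n) = 2 * (-1 : ℝ) ^ n ∧
    (∀ μ : Fin n → ℝ,
      SZP = Polynomial.C ((2 : ℝ) * (-1) ^ n) *
          ∏ i, ((X - Polynomial.C (μ i)) * (X + Polynomial.C (μ i))) →
      (∏ i, μ i) ^ 2 = (∏ i, p i) * (∏ i, z i)) := by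
  have hsq : ((-1 : ℝ) ^ n) * ((-1 : ℝ) ^ n) = 1 := by
    rw [← pow_add]; exact Even.neg_one_pow ⟨n, rfl⟩
  have h0 : ((∏ i, (X - Polynomial.C (z i))) * (∏ i, (-X - Polynomial.C (p i))) +
        (∏ i, (-X - Polynomial.C (z i))) * (∏ i, (X - Polynomial.C (p i)))).coeff 0
      = 2 * (∏ i, p i) * (∏ i, z i) := by
    rw [coeff_zero_eq_eval_zero]
    simp only [eval_add, eval_mul, eval_prod, eval_sub, eval_neg, eval_X, eval_C,
      zero_sub, neg_zero]
    rw [prod_neg' n z, prod_neg' n p]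
    linear_combination (2 * (∏ i, z i) * (∏ i, p i)) * hsq
  have hlead : ((∏ i, (X - Polynomial.C (z i))) * (∏ i, (-X - Polynomial.C (p i))) +
        (∏ i, (-X - Polynomial.C (z i))) * (∏ i, (X - Polynomial.C (p i)))).coeff (2 * n)
      = 2 * (-1 : ℝ) ^ n := by
    have e1 : (∏ i, (-X - Polynomial.C (p i))) =
        Polynomial.C ((-1 : ℝ) ^ n) * ∏ i, (X + Polynomial.C (p i)) := by
      rw [show Polynomial.C ((-1 : ℝ) ^ n) = (-1 : Polynomial ℝ) ^ n by simp,
        ← prod_neg' n fun i => (X + Polynomial.C (p i))]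
      exact Finset.prod_congr rfl fun i _ => by ring
    have e2 : (∏ i, (-X - Polynomial.C (z i))) =
        Polynomial.C ((-1 : ℝ) ^ n) * ∏ i, (X + Polynomial.C (z i)) := by
      rw [show Polynomial.C ((-1 : ℝ) ^ n) = (-1 : Polynomial ℝ) ^ n by simp,
        ← prod_neg' n fun i => (X + Polynomial.C (z i))]
      exact Finset.prod_congr rfl fun i _ => by ring
    have mzs : (∏ i, (X - Polynomial.C (z i))).Monic :=
      monic_prod_of_monic _ _ fun i _ => monic_X_sub_C _
    have mps : (∏ i, (X - Polynomial.C (p i))).Monic :=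
      monic_prod_of_monic _ _ fun i _ => monic_X_sub_C _
    have mza : (∏ i, (X + Polynomial.C (z i))).Monic :=
      monic_prod_of_monic _ _ fun i _ => monic_X_add_C _
    have mpa : (∏ i, (X + Polynomial.C (p i))).Monic :=
      monic_prod_of_monic _ _ fun i _ => monic_X_add_C _
    have dzs : (∏ i, (X - Polynomial.C (z i))).natDegree = n := by
      rw [natDegree_prod_of_monic _ _ fun i _ => monic_X_sub_C _]; simp
    have dps : (∏ i, (X - Polynomial.C (p i))).natDegree = n := by
      rw [natDegree_prod_of_monic _ _ fun i _ => monic_X_sub_C _]; simp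
    have dza : (∏ i, (X + Polynomial.C (z i))).natDegree = n := by
      rw [natDegree_prod_of_monic _ _ fun i _ => monic_X_add_C _]; simp
    have dpa : (∏ i, (X + Polynomial.C (p i))).natDegree = n := by
      rw [natDegree_prod_of_monic _ _ fun i _ => monic_X_add_C _]; simp
    have c1 : ((∏ i, (X - Polynomial.C (z i))) * (∏ i, (X + Polynomial.C (p i)))).coeff (2 * n)
        = 1 := by
      have hd : ((∏ i, (X - Polynomial.C (z i))) * (∏ i, (X + Polynomial.C (p i)))).natDegree
          = 2 * n := by rw [mzs.natDegree_mul mpa, dzs, dpa, two_mul]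
      rw [← hd]; exact (mzs.mul mpa).coeff_natDegree
    have c2 : ((∏ i, (X + Polynomial.C (z i))) * (∏ i, (X - Polynomial.C (p i)))).coeff (2 * n)
        = 1 := by
      have hd : ((∏ i, (X + Polynomial.C (z i))) * (∏ i, (X - Polynomial.C (p i)))).natDegree
          = 2 * n := by rw [mza.natDegree_mul mps, dza, dps, two_mul]
      rw [← hd]; exact (mza.mul mps).coeff_natDegree
    rw [e1, e2, mul_left_comm, mul_assoc, coeff_add, coeff_C_mul, coeff_C_mul, c1, c2]
    ring
  refine ⟨h0, hlead, ?_⟩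
  intro μ hμ
  have hc := congrArg (fun q : Polynomial ℝ => q.coeff 0) hμ
  rw [h0, coeff_zero_eq_eval_zero] at hc
  simp only [eval_mul, eval_C, eval_prod, eval_sub, eval_add, eval_X, zero_sub, zero_add] at hc
  have hr : (∏ i, (-μ i * μ i)) = (-1 : ℝ) ^ n * ∏ i, (μ i) ^ 2 := by
    rw [← prod_neg' n fun i => (μ i) ^ 2]
    exact Finset.prod_congr rfl fun i _ => by ring
  rw [hr, Finset.prod_pow] at hc
  linear_combination (-(1/2 : ℝ)) * hc - (∏ i, μ i) ^ 2 * hsq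
end

section
/- Suppose a rational function G(s) has n real negative simple poles p_1 < ⋯ < p_n and admits a partial-fraction representation G(s) = g_∞ + Σ_k g_k/(s − p_k) with g_∞ > 0 and g_k > 0. Then all zeros of G(s) + G(−s) are real. -/
/-- If `G(s) = gInf + Σ g_k/(s−p_k)` with `gInf > 0`, `g_k > 0` and real negative distinct
poles `p_1 < ⋯ < p_n`, then all zeros of `G(s) + G(−s)` are real. -/
theorem stmt6 (n : ℕ) (gInf : ℝ) (g p : Fin n → ℝ) (hgInf : 0 < gInf)
    (hg : ∀ k, 0 < g k) (hp : ∀ k, p k < 0) (hmono : StrictMono p)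
    (μ : ℂ) (hμ : ∀ k, μ ≠ ((p k : ℝ) : ℂ)) (hμ' : ∀ k, -μ ≠ ((p k : ℝ) : ℂ))
    (hzero :
      ((gInf : ℂ) + ∑ k, (g k : ℂ) / (μ - (p k : ℂ))) +
        ((gInf : ℂ) + ∑ k, (g k : ℂ) / (-μ - (p k : ℂ))) = 0) :
    μ.im = 0 := by
  by_contra hy
  have hre := congrArg Complex.re hzero
  have him := congrArg Complex.im hzero
  simp only [Complex.add_re, Complex.add_im, Complex.re_sum, Complex.im_sum,
    Complex.div_re, Complex.div_im, Complex.sub_re, Complex.sub_im,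
    Complex.neg_re, Complex.neg_im, Complex.ofReal_re, Complex.ofReal_im,
    Complex.zero_re, Complex.zero_im, zero_mul, mul_zero, zero_div, add_zero,
    zero_add, zero_sub, neg_zero, neg_neg] at hre him
  set x := μ.re with hxd
  set y := μ.im with hyd
  set A : Fin n → ℝ := fun k => Complex.normSq (μ - (p k : ℂ)) with hAd
  set B : Fin n → ℝ := fun k => Complex.normSq (-μ - (p k : ℂ)) with hBd
  have hA : ∀ k, 0 < A k := fun k => Complex.normSq_pos.mpr (sub_ne_zero.mpr (hμ k))
  have hB : ∀ k, 0 < B k := fun k => Complex.normSq_pos.mpr (sub_ne_zero.mpr (hμ' k))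
  -- rewrite the imaginary part
  have e1 : ∑ k, -(g k * (y - 0) / A k) = -y * ∑ k, g k / A k := by
    rw [Finset.mul_sum]; exact Finset.sum_congr rfl fun k _ => by ring
  have e2 : ∑ k, -(g k * (-y - 0) / B k) = y * ∑ k, g k / B k := by
    rw [Finset.mul_sum]; exact Finset.sum_congr rfl fun k _ => by ring
  rw [e1, e2] at him
  have hSAB : ∑ k, g k / A k = ∑ k, g k / B k := by
    have h : y * (∑ k, g k / B k - ∑ k, g k / A k) = 0 := by linarith [him]; 
    rcases mul_eq_zero.mp h with h | h
    · exact absurd h hy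
    · linarith [sub_eq_zero.mp h]
  -- rewrite the real part
  have e3 : ∑ k, g k * (x - p k) / A k
      = x * ∑ k, g k / A k - ∑ k, g k * p k / A k := by
    rw [Finset.mul_sum, ← Finset.sum_sub_distrib]
    exact Finset.sum_congr rfl fun k _ => by ring
  have e4 : ∑ k, g k * (-x - p k) / B k
      = -(x * ∑ k, g k / B k) - ∑ k, g k * p k / B k := by
    rw [Finset.mul_sum, ← Finset.sum_neg_distrib, ← Finset.sum_sub_distrib]
    exact Finset.sum_congr rfl fun k _ => by ring
  rw [e3, e4, hSAB] at hre
  have hT1 : ∑ k, g k * p k / A k ≤ 0 :=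
    Finset.sum_nonpos fun k _ => by
      have h := div_nonneg (mul_nonneg (hg k).le (neg_nonneg.mpr (hp k).le)) (hA k).le
      have : g k * p k / A k = -(g k * -p k / A k) := by ring
      linarith
  have hT2 : ∑ k, g k * p k / B k ≤ 0 :=
    Finset.sum_nonpos fun k _ => by
      have h := div_nonneg (mul_nonneg (hg k).le (neg_nonneg.mpr (hp k).le)) (hB k).le
      have : g k * p k / B k = -(g k * -p k / B k) := by ring
      linarith
  linarith [hre]
end

section
/- Let G(s) = Π_{i=1}^n (s−z_i)/Π_{i=1}^n (s−p_i) with real numbers satisfying the interlacing z_1 < p_1 < z_2 < p_2 < ⋯ < z_n < p_n < 0. Then in each open interval (z_i, p_i) there is exactly one stable spectral zero μ_i (a root of the numerator of G(s)+G(−s)), and there are no roots of that numerator in [p_n, 0], in (−∞, z_1], or in any interval [p_i, z_{i+1}]. -/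
open Polynomial

lemma stmt7_key (a b c d : ℝ) (hc : 0 < c) (hd : 0 < d)
    (hab : 0 ≤ a * b) (h : a ≠ 0 ∨ b ≠ 0) : a * d + c * b ≠ 0 := by
  rcases hab.lt_or_eq with h1 | h1
  · rcases mul_pos_iff.mp h1 with ⟨ha, hb⟩ | ⟨ha, hb⟩ <;> nlinarith
  · rcases (mul_eq_zero.mp h1.symm) with ha | hb
    · rcases h with h | h
      · exact absurd ha h
      · rw [ha, zero_mul, zero_add]; exact mul_ne_zero hc.ne' h
    · rcases h with h | h
      · rw [hb, mul_zero, add_zero]; exact mul_ne_zero h hd.ne'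
      · exact absurd hb h


/-- For interlaced real negative poles/zeros `z_1<p_1<z_2<⋯<z_n<p_n<0`, each open
interval `(z_i, p_i)` contains exactly one root of SZP, and SZP has no roots in
`[p_n, 0]`, `(−∞, z_1]` or any `[p_i, z_{i+1}]`. -/
theorem stmt7 (n : ℕ) (p z : Fin (n + 1) → ℝ)
    (hzp : ∀ i, z i < p i)
    (hpz : ∀ i : Fin n, p i.castSucc < z i.succ)
    (hp0 : p (Fin.last n) < 0) :
    let SZP : Polynomial ℝ :=
      (∏ i, (X - Polynomial.C (z i))) * (∏ i, (-X - Polynomial.C (p i))) +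
        (∏ i, (-X - Polynomial.C (z i))) * (∏ i, (X - Polynomial.C (p i)))
    (∀ i, ∃! μ : ℝ, μ ∈ Set.Ioo (z i) (p i) ∧ SZP.eval μ = 0) ∧
    (∀ s ∈ Set.Icc (p (Fin.last n)) (0 : ℝ), SZP.eval s ≠ 0) ∧
    (∀ s ≤ z 0, SZP.eval s ≠ 0) ∧
    (∀ i : Fin n, ∀ s ∈ Set.Icc (p i.castSucc) (z i.succ), SZP.eval s ≠ 0) := by
  intro SZP
  -- ordering facts
  have hzmono : StrictMono z :=
    Fin.strictMono_iff_lt_succ.mpr fun i => (hzp i.castSucc).trans (hpz i)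
  have hpmono : StrictMono p :=
    Fin.strictMono_iff_lt_succ.mpr fun i => (hpz i).trans (hzp i.succ)
  have hplt0 : ∀ j, p j < 0 := fun j => lt_of_le_of_lt (hpmono.monotone (Fin.le_last j)) hp0
  have hzlt0 : ∀ j, z j < 0 := fun j => (hzp j).trans (hplt0 j)
  have hzplt : ∀ j k : Fin (n+1), j ≤ k → z j < p k :=
    fun j k h => lt_of_le_of_lt (hzmono.monotone h) (hzp k)
  have hpzlt : ∀ j k : Fin (n+1), j < k → p j < z k := by
    intro j k hjk
    have h1 : (j : ℕ) < (k : ℕ) := hjk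
    have h2 := k.isLt
    have hjn : (j : ℕ) < n := by omega
    have key := hpz ⟨j, hjn⟩
    have e1 : (⟨(j:ℕ), hjn⟩ : Fin n).castSucc = j := rfl
    have h3 : z (Fin.succ ⟨j, hjn⟩) ≤ z k := by
      apply hzmono.monotone
      rw [Fin.le_def]
      simp [Fin.val_succ]
      omega
    rw [e1] at key
    linarith
  have hzne : ∀ j k : Fin (n+1), z j ≠ p k := by
    intro j k
    rcases le_or_gt j k with h | h
    · exact (hzplt j k h).ne
    · exact (hpzlt k j h).ne'
  -- evaluation
  have hev : ∀ s : ℝ, SZP.eval s =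
      (∏ j, (s - z j)) * (∏ j, (-s - p j)) + (∏ j, (-s - z j)) * (∏ j, (s - p j)) := by
    intro s
    simp [SZP, eval_prod]
  have hbarz : ∀ s : ℝ, s ≤ 0 → 0 < ∏ j, (-s - z j) := by
    intro s hs
    exact Finset.prod_pos fun j _ => by have := hzlt0 j; linarith
  have hbarp : ∀ s : ℝ, s ≤ 0 → 0 < ∏ j, (-s - p j) := by
    intro s hs
    exact Finset.prod_pos fun j _ => by have := hplt0 j; linarith
  -- Part 2 : no roots in [p_n, 0]
  have part2 : ∀ s ∈ Set.Icc (p (Fin.last n)) (0 : ℝ), SZP.eval s ≠ 0 := by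
    rintro s ⟨hs1, hs2⟩
    rw [hev]
    have ha : 0 < ∏ j, (s - z j) := Finset.prod_pos fun j _ => by
      have h1 := hzplt j (Fin.last n) (Fin.le_last j); linarith
    have hb : 0 ≤ ∏ j, (s - p j) := Finset.prod_nonneg fun j _ => by
      have h1 := hpmono.monotone (Fin.le_last j); linarith
    have h1 := hbarz s hs2
    have h2 := hbarp s hs2
    nlinarith [mul_pos ha h2, mul_nonneg h1.le hb]
  -- Part 3 : no roots in (-∞, z_0]
  have part3 : ∀ s ≤ z 0, SZP.eval s ≠ 0 := by
    intro s hs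
    have hs0 : s ≤ 0 := hs.trans (hzlt0 0).le
    rw [hev]
    refine stmt7_key _ _ _ _ (hbarz s hs0) (hbarp s hs0) ?_ (Or.inr ?_)
    · rw [← Finset.prod_mul_distrib]
      refine Finset.prod_nonneg fun j _ => ?_
      have h1 := hzmono.monotone (Fin.zero_le j)
      have h2 := hzplt 0 j (Fin.zero_le j)
      nlinarith []
    · refine Finset.prod_ne_zero_iff.mpr fun j _ => ?_
      have h2 := hzplt 0 j (Fin.zero_le j)
      intro h; linarith [hs, h2]
  -- Part 4 : no roots in [p_i, z_{i+1}]
  have part4 : ∀ i : Fin n, ∀ s ∈ Set.Icc (p i.castSucc) (z i.succ), SZP.eval s ≠ 0 := by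
    rintro i s ⟨hs1, hs2⟩
    have hs0 : s ≤ 0 := hs2.trans (hzlt0 i.succ).le
    rw [hev]
    refine stmt7_key _ _ _ _ (hbarz s hs0) (hbarp s hs0) ?_ ?_
    · rw [← Finset.prod_mul_distrib]
      refine Finset.prod_nonneg fun j _ => ?_
      rcases le_or_gt j i.castSucc with h | h
      · have h1 := hpmono.monotone h
        have h2 := hzp j
        exact mul_nonneg (by linarith) (by linarith)
      · have h1 : i.succ ≤ j := Fin.castSucc_lt_iff_succ_le.mp h
        have h2 := hzmono.monotone h1
        have h3 := hzp j
        nlinarith []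
    · rcases eq_or_ne (∏ j, (s - z j)) 0 with ha | ha
      · refine Or.inr fun hb => ?_
        obtain ⟨j, _, hj⟩ := Finset.prod_eq_zero_iff.mp ha
        obtain ⟨k, _, hk⟩ := Finset.prod_eq_zero_iff.mp hb
        exact hzne j k (by linarith [sub_eq_zero.mp hj, sub_eq_zero.mp hk])
      · exact Or.inl ha
  -- existence of roots
  have hroot : ∀ i, ∃ μ ∈ Set.Ioo (z i) (p i), SZP.eval μ = 0 := by
    intro i
    have hfz : SZP.eval (z i) = (∏ j, (-(z i) - z j)) * (∏ j, (z i - p j)) := by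
      rw [hev, show (∏ j, (z i - z j)) = 0 from
        Finset.prod_eq_zero (Finset.mem_univ i) (sub_self _)]
      ring
    have hfp : SZP.eval (p i) = (∏ j, (p i - z j)) * (∏ j, (-(p i) - p j)) := by
      rw [hev, show (∏ j, (p i - p j)) = 0 from
        Finset.prod_eq_zero (Finset.mem_univ i) (sub_self _)]
      ring
    have hmul : SZP.eval (z i) * SZP.eval (p i) < 0 := by
      rw [hfz, hfp]
      have h1 : 0 < ∏ j, (-(z i) - z j) :=
        Finset.prod_pos fun j _ => by have := hzlt0 i; have := hzlt0 j; linarith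
      have h2 : 0 < ∏ j, (-(p i) - p j) :=
        Finset.prod_pos fun j _ => by have := hplt0 i; have := hplt0 j; linarith
      have h3 : (∏ j, (z i - p j)) * (∏ j, (p i - z j)) < 0 := by
        rw [← Finset.prod_mul_distrib,
          ← Finset.mul_prod_erase Finset.univ _ (Finset.mem_univ i)]
        have hneg : (z i - p i) * (p i - z i) < 0 := by nlinarith [hzp i]
        have hpos : 0 < ∏ j ∈ Finset.univ.erase i, (z i - p j) * (p i - z j) := by
          refine Finset.prod_pos fun j hj => ?_
          have hji : j ≠ i := Finset.ne_of_mem_erase hj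
          rcases lt_or_gt_of_ne hji with h | h
          · have h1 := hpzlt j i h
            have h2 := hzplt j i h.le
            exact mul_pos (by linarith) (by linarith)
          · have h1 := hzplt i j h.le
            have h2 := hpzlt i j h
            exact mul_pos_of_neg_of_neg (by linarith) (by linarith)
        exact mul_neg_of_neg_of_pos hneg hpos
      nlinarith [mul_pos h1 h2]
    have hcont : ContinuousOn (fun x => SZP.eval x) (Set.Icc (z i) (p i)) :=
      (Polynomial.continuous SZP).continuousOn
    rcases mul_neg_iff.mp hmul with ⟨h1, h2⟩ | ⟨h1, h2⟩
    · obtain ⟨μ, hμ, hμ0⟩ := intermediate_value_Ioo' (hzp i).le hcont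
        (Set.mem_Ioo.mpr ⟨h2, h1⟩)
      exact ⟨μ, hμ, hμ0⟩
    · obtain ⟨μ, hμ, hμ0⟩ := intermediate_value_Ioo (hzp i).le hcont
        (Set.mem_Ioo.mpr ⟨h1, h2⟩)
      exact ⟨μ, hμ, hμ0⟩
  choose r hrmem hr0 using hroot
  -- SZP is nonzero
  have hSZPne : SZP ≠ 0 := by
    intro h
    exact part2 0 ⟨hp0.le, le_refl 0⟩ (by rw [h, eval_zero])
  -- degree bound
  have hdeg : SZP.natDegree ≤ 2 * n + 2 := by
    have d1 : (∏ i, (X - C (z i)) : ℝ[X]).natDegree ≤ n + 1 := by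
      refine le_trans (natDegree_prod_le _ _) ?_
      simp [natDegree_X_sub_C]
    have d2 : ∀ c : Fin (n+1) → ℝ, (∏ i, (-X - C (c i)) : ℝ[X]).natDegree ≤ n + 1 := by
      intro c
      refine le_trans (natDegree_prod_le _ _) ?_
      have : ∀ i : Fin (n+1), (-X - C (c i) : ℝ[X]).natDegree ≤ 1 := by
        intro i
        have : (-X - C (c i) : ℝ[X]) = -(X + C (c i)) := by ring
        rw [this, natDegree_neg, natDegree_X_add_C]
      calc ∑ i, (-X - C (c i) : ℝ[X]).natDegree ≤ ∑ _i : Fin (n+1), 1 :=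
            Finset.sum_le_sum fun i _ => this i
        _ = n + 1 := by simp
    have d3 : (∏ i, (X - C (p i)) : ℝ[X]).natDegree ≤ n + 1 := by
      refine le_trans (natDegree_prod_le _ _) ?_
      simp [natDegree_X_sub_C]
    refine le_trans (natDegree_add_le _ _) (max_le ?_ ?_)
    · exact le_trans (natDegree_mul_le) (by have := d2 p; omega)
    · exact le_trans (natDegree_mul_le) (by have := d2 z; omega)
  -- evenness
  have hevn : ∀ s : ℝ, SZP.eval (-s) = SZP.eval s := by
    intro s
    rw [hev, hev]
    simp only [neg_neg]
    ring
  -- r is strictly monotone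
  have hrlt : ∀ j k : Fin (n+1), j < k → r j < r k := by
    intro j k h
    have h1 := (hrmem j).2
    have h2 := hpzlt j k h
    have h3 := (hrmem k).1
    linarith
  -- uniqueness via root counting
  have huniq : ∀ i : Fin (n+1), ∀ ν ∈ Set.Ioo (z i) (p i), SZP.eval ν = 0 → ν = r i := by
    intro i ν hνmem hν0
    by_contra hne
    set T : Finset ℝ := insert ν (Finset.image r Finset.univ) with hT
    have hνnotmem : ν ∉ Finset.image r Finset.univ := by
      intro h
      obtain ⟨j, _, hj⟩ := Finset.mem_image.mp h
      rcases lt_trichotomy j i with h | h | h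
      · have h1 := (hrmem j).2
        have h2 := hpzlt j i h
        have h3 := hνmem.1
        rw [← hj] at *; linarith
      · exact hne (h ▸ hj).symm
      · have h1 := (hrmem j).1
        have h2 := hpzlt i j h
        have h3 := hνmem.2
        rw [← hj] at *; linarith
    have hrinj : Function.Injective r := by
      intro a b hab
      by_contra h
      rcases lt_or_gt_of_ne h with h | h
      · exact absurd hab (hrlt a b h).ne
      · exact absurd hab (hrlt b a h).ne'
    have hTcard : T.card = n + 2 := by
      rw [hT, Finset.card_insert_of_notMem hνnotmem,
        Finset.card_image_of_injective _ hrinj]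
      simp
    have hTneg : ∀ x ∈ T, x < 0 := by
      intro x hx
      rcases Finset.mem_insert.mp hx with h | h
      · have := hνmem.2; have := hplt0 i; subst h; linarith
      · obtain ⟨j, _, hj⟩ := Finset.mem_image.mp h
        have := (hrmem j).2; have := hplt0 j; subst hj; linarith
    have hTroot : ∀ x ∈ T, SZP.eval x = 0 := by
      intro x hx
      rcases Finset.mem_insert.mp hx with h | h
      · subst h; exact hν0
      · obtain ⟨j, _, hj⟩ := Finset.mem_image.mp h
        subst hj; exact hr0 j
    set S : Finset ℝ := T ∪ T.image (fun x => -x) with hS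
    have hdisj : Disjoint T (T.image (fun x => -x)) := by
      rw [Finset.disjoint_left]
      intro x hx hx2
      obtain ⟨y, hy, hyx⟩ := Finset.mem_image.mp hx2
      have h1 := hTneg x hx
      have h2 := hTneg y hy
      rw [← hyx] at h1
      linarith
    have hScard : S.card = 2 * n + 4 := by
      rw [hS, Finset.card_union_of_disjoint hdisj,
        Finset.card_image_of_injective _ neg_injective, hTcard]
      ring
    have hSsub : S ⊆ SZP.roots.toFinset := by
      intro x hx
      rw [Multiset.mem_toFinset, mem_roots hSZPne]
      rcases Finset.mem_union.mp hx with h | h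
      · exact hTroot x h
      · obtain ⟨y, hy, hyx⟩ := Finset.mem_image.mp h
        have := hTroot y hy
        show SZP.eval x = 0
        rw [← hyx, hevn]; exact this
    have h1 := Finset.card_le_card hSsub
    have h2 := Multiset.toFinset_card_le SZP.roots
    have h3 := SZP.card_roots' 
    omega
  refine ⟨fun i => ⟨r i, ⟨hrmem i, hr0 i⟩, fun ν hν => huniq i ν hν.1 hν.2⟩, part2, part3, part4⟩
end

section
/- Let (A, B, C, D) be a state-space realization with A = Aᵀ, B = Cᵀ, D = Dᵀ, D + Dᵀ invertible. If K is a symmetric invertible solution of the Riccati equation AᵀK + KA + (KB − Cᵀ)(D+Dᵀ)^{-1}(BᵀK − C) = 0, then K^{-1} is also a solution of the same equation. -/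
open Matrix

/-- If `(A,B,C,D)` is a symmetric realization with `B = Cᵀ` and `K` is a symmetric
invertible solution of the ARE, then `K⁻¹` also solves the ARE. -/
theorem stmt8 (n m : ℕ) (A : Matrix (Fin n) (Fin n) ℝ) (B : Matrix (Fin n) (Fin m) ℝ)
    (C : Matrix (Fin m) (Fin n) ℝ) (D : Matrix (Fin m) (Fin m) ℝ)
    (hA : Aᵀ = A) (hC : C = Bᵀ) (hD : Dᵀ = D) (hDD : IsUnit (D + Dᵀ))
    (K : Matrix (Fin n) (Fin n) ℝ) (hK : Kᵀ = K) (hKu : IsUnit K)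
    (hARE : Aᵀ * K + K * A + (K * B - Cᵀ) * (D + Dᵀ)⁻¹ * (Bᵀ * K - C) = 0) :
    Aᵀ * K⁻¹ + K⁻¹ * A + (K⁻¹ * B - Cᵀ) * (D + Dᵀ)⁻¹ * (Bᵀ * K⁻¹ - C) = 0 := by
  subst hC
  rw [hA, transpose_transpose] at hARE ⊢
  have hdet : IsUnit K.det := (Matrix.isUnit_iff_isUnit_det K).mp hKu
  have h1 : K⁻¹ * K = 1 := Matrix.nonsing_inv_mul K hdet
  have h2 : K * K⁻¹ = 1 := Matrix.mul_nonsing_inv K hdet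
  set E := (D + Dᵀ)⁻¹
  set L := K⁻¹ with hL
  have hs := congrArg (fun M => L * M * L) hARE
  simp only [Matrix.mul_add, Matrix.add_mul, Matrix.mul_zero, Matrix.zero_mul] at hs
  have t1 : L * (A * K) * L = L * A := by
    rw [← Matrix.mul_assoc, Matrix.mul_assoc (L * A) K L, h2, Matrix.mul_one]
  have t2 : L * (K * A) * L = A * L := by
    rw [← Matrix.mul_assoc, h1, Matrix.one_mul]
  have t3 : L * ((K * B - B) * E * (Bᵀ * K - Bᵀ)) * L
      = (L * B - B) * E * (Bᵀ * L - Bᵀ) := by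
    have e1 : L * (K * B - B) = -(L * B - B) := by
      rw [Matrix.mul_sub, ← Matrix.mul_assoc, h1, Matrix.one_mul, neg_sub]
    have e2 : (Bᵀ * K - Bᵀ) * L = -(Bᵀ * L - Bᵀ) := by
      rw [Matrix.sub_mul, Matrix.mul_assoc, h2, Matrix.mul_one, neg_sub]
    calc L * ((K * B - B) * E * (Bᵀ * K - Bᵀ)) * L
        = (L * (K * B - B)) * E * ((Bᵀ * K - Bᵀ) * L) := by
          simp only [Matrix.mul_assoc]
      _ = (L * B - B) * E * (Bᵀ * L - Bᵀ) := by
          rw [e1, e2, Matrix.neg_mul, Matrix.neg_mul, Matrix.mul_neg, neg_neg]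
  rw [t1, t2, t3] at hs
  rwa [add_comm (A * L) (L * A)]
end

section
/- Let (A, B, C, D) be a state-space realization with A = Aᵀ, B = −Cᵀ, D = Dᵀ, D + Dᵀ invertible. If K is a symmetric invertible solution of AᵀK + KA + (KB − Cᵀ)(D+Dᵀ)^{-1}(BᵀK − C) = 0, then K^{-1} also solves the same equation. -/
open Matrix

/-- If `(A,B,C,D)` is a symmetric realization with `B = −Cᵀ` and `K` is a symmetric
invertible solution of the ARE, then `K⁻¹` also solves the ARE. -/
theorem stmt9 (n m : ℕ) (A : Matrix (Fin n) (Fin n) ℝ) (B : Matrix (Fin n) (Fin m) ℝ)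
    (C : Matrix (Fin m) (Fin n) ℝ) (D : Matrix (Fin m) (Fin m) ℝ)
    (hA : Aᵀ = A) (hC : C = -Bᵀ) (hD : Dᵀ = D) (hDD : IsUnit (D + Dᵀ))
    (K : Matrix (Fin n) (Fin n) ℝ) (hK : Kᵀ = K) (hKu : IsUnit K)
    (hARE : Aᵀ * K + K * A + (K * B - Cᵀ) * (D + Dᵀ)⁻¹ * (Bᵀ * K - C) = 0) :
    Aᵀ * K⁻¹ + K⁻¹ * A + (K⁻¹ * B - Cᵀ) * (D + Dᵀ)⁻¹ * (Bᵀ * K⁻¹ - C) = 0 := by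
  have hKd : IsUnit K.det := (Matrix.isUnit_iff_isUnit_det K).mp hKu
  have h1 : K⁻¹ * K = 1 := Matrix.nonsing_inv_mul K hKd
  have h2 : K * K⁻¹ = 1 := Matrix.mul_nonsing_inv K hKd
  have key := congrArg (fun M => K⁻¹ * M * K⁻¹) hARE
  simp only [Matrix.mul_zero, Matrix.zero_mul] at key
  rw [← key]
  have h3 : ∀ p (X : Matrix (Fin n) (Fin p) ℝ), K⁻¹ * (K * X) = X := fun p X => by
    rw [← Matrix.mul_assoc, h1, Matrix.one_mul]
  rw [hA, hC] at *
  simp only [Matrix.transpose_neg, Matrix.transpose_transpose, sub_neg_eq_add,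
    Matrix.mul_add, Matrix.add_mul, Matrix.mul_assoc, h1, h2,
    Matrix.mul_one, Matrix.one_mul, h3]
  abel
end

section
/- Let (A_Z, B_Z, C_Z, D_Z) define a system with D_Z invertible and D_Z + D_Zᵀ invertible, and define the inverse system A_Y = A_Z − B_Z D_Z^{-1} C_Z, B_Y = B_Z D_Z^{-1}, C_Y = −D_Z^{-1} C_Z, D_Y = D_Z^{-1}. Assume D_Y + D_Yᵀ is invertible. Then the Hamiltonian matrices H_Z and H_Y, defined by H = [[A − B(D+Dᵀ)^{-1}C, B(D+Dᵀ)^{-1}Bᵀ], [−Cᵀ(D+Dᵀ)^{-1}C, −(A − B(D+Dᵀ)^{-1}C)ᵀ]], coincide: H_Z = H_Y. -/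
open Matrix

/-- The Hamiltonian matrices of a system `(A_Z,B_Z,C_Z,D_Z)` and of its inverse
system `(A_Y,B_Y,C_Y,D_Y)` coincide. -/
theorem stmt11 (n m : ℕ)
    (AZ : Matrix (Fin n) (Fin n) ℝ) (BZ : Matrix (Fin n) (Fin m) ℝ)
    (CZ : Matrix (Fin m) (Fin n) ℝ) (DZ : Matrix (Fin m) (Fin m) ℝ)
    (hDZ : IsUnit DZ) (hDZs : IsUnit (DZ + DZᵀ))
    (AY : Matrix (Fin n) (Fin n) ℝ) (BY : Matrix (Fin n) (Fin m) ℝ)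
    (CY : Matrix (Fin m) (Fin n) ℝ) (DY : Matrix (Fin m) (Fin m) ℝ)
    (hAY : AY = AZ - BZ * DZ⁻¹ * CZ) (hBY : BY = BZ * DZ⁻¹)
    (hCY : CY = -(DZ⁻¹ * CZ)) (hDY : DY = DZ⁻¹)
    (hDYs : IsUnit (DY + DYᵀ)) :
    Matrix.fromBlocks (AZ - BZ * (DZ + DZᵀ)⁻¹ * CZ) (BZ * (DZ + DZᵀ)⁻¹ * BZᵀ)
        (-(CZᵀ * (DZ + DZᵀ)⁻¹ * CZ)) (-(AZ - BZ * (DZ + DZᵀ)⁻¹ * CZ)ᵀ) =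
    Matrix.fromBlocks (AY - BY * (DY + DYᵀ)⁻¹ * CY) (BY * (DY + DYᵀ)⁻¹ * BYᵀ)
        (-(CYᵀ * (DY + DYᵀ)⁻¹ * CY)) (-(AY - BY * (DY + DYᵀ)⁻¹ * CY)ᵀ) := by
  subst hAY hBY hCY hDY
  have hDZd : IsUnit DZ.det := (Matrix.isUnit_iff_isUnit_det DZ).mp hDZ
  have hDZtd : IsUnit DZᵀ.det := by rwa [Matrix.det_transpose]
  have hEd : IsUnit (DZ + DZᵀ).det := (Matrix.isUnit_iff_isUnit_det _).mp hDZs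
  have h1 : DZ⁻¹ * DZ = 1 := Matrix.nonsing_inv_mul DZ hDZd
  have h2 : DZ * DZ⁻¹ = 1 := Matrix.mul_nonsing_inv DZ hDZd
  have h1t : (DZᵀ)⁻¹ * DZᵀ = 1 := Matrix.nonsing_inv_mul _ hDZtd
  have h2t : DZᵀ * (DZᵀ)⁻¹ = 1 := Matrix.mul_nonsing_inv _ hDZtd
  have h3 : (DZ + DZᵀ)⁻¹ * (DZ + DZᵀ) = 1 := Matrix.nonsing_inv_mul _ hEd
  have h4 : (DZ + DZᵀ) * (DZ + DZᵀ)⁻¹ = 1 := Matrix.mul_nonsing_inv _ hEd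
  have hit : (DZ⁻¹)ᵀ = (DZᵀ)⁻¹ := Matrix.transpose_nonsing_inv DZ
  -- factorization of DZ⁻¹ + DZ⁻ᵀ
  have hfact : DZ⁻¹ + (DZ⁻¹)ᵀ = DZ⁻¹ * (DZ + DZᵀ) * (DZᵀ)⁻¹ := by
    rw [hit, mul_add, h1, add_mul, Matrix.one_mul, Matrix.mul_assoc, h2t, Matrix.mul_one, add_comm]
  have hKey : (DZ⁻¹ + (DZ⁻¹)ᵀ)⁻¹ = DZᵀ * (DZ + DZᵀ)⁻¹ * DZ := by
    rw [hfact, Matrix.mul_inv_rev, Matrix.mul_inv_rev,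
        Matrix.nonsing_inv_nonsing_inv _ hDZd, Matrix.nonsing_inv_nonsing_inv _ hDZtd,
        Matrix.mul_assoc]
  -- cancellation identities
  have hM1 : DZᵀ * (DZ + DZᵀ)⁻¹ = 1 - DZ * (DZ + DZᵀ)⁻¹ := by
    have := h4
    rw [add_mul] at this
    exact eq_sub_of_add_eq' this
  have hM2 : (DZ + DZᵀ)⁻¹ * DZ = 1 - (DZ + DZᵀ)⁻¹ * DZᵀ := by
    have := h3
    rw [mul_add] at this
    exact eq_sub_of_add_eq this
  have cDC : DZ * (DZ⁻¹ * CZ) = CZ := by rw [← Matrix.mul_assoc, h2, Matrix.one_mul]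
  -- block 11 (and 22)
  have h11 : AZ - BZ * DZ⁻¹ * CZ - BZ * DZ⁻¹ * (DZ⁻¹ + (DZ⁻¹)ᵀ)⁻¹ * (-(DZ⁻¹ * CZ)) =
      AZ - BZ * (DZ + DZᵀ)⁻¹ * CZ := by
    rw [hKey]
    simp only [Matrix.mul_assoc, Matrix.mul_neg, sub_neg_eq_add]
    rw [cDC]
    have d : DZ⁻¹ * (DZᵀ * ((DZ + DZᵀ)⁻¹ * CZ)) = DZ⁻¹ * CZ - (DZ + DZᵀ)⁻¹ * CZ := by
      rw [← Matrix.mul_assoc DZᵀ, hM1, Matrix.sub_mul, Matrix.one_mul, Matrix.mul_sub, Matrix.mul_assoc,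
          ← Matrix.mul_assoc DZ⁻¹ DZ, h1, Matrix.one_mul]
    rw [d, Matrix.mul_sub]
    abel
  -- block 12
  have h12 : BZ * DZ⁻¹ * (DZ⁻¹ + (DZ⁻¹)ᵀ)⁻¹ * (BZ * DZ⁻¹)ᵀ =
      BZ * (DZ + DZᵀ)⁻¹ * BZᵀ := by
    rw [hKey, Matrix.transpose_mul, hit]
    simp only [Matrix.mul_assoc]
    have d1 : (DZ + DZᵀ)⁻¹ * (DZ * ((DZᵀ)⁻¹ * BZᵀ)) =
        (DZᵀ)⁻¹ * BZᵀ - (DZ + DZᵀ)⁻¹ * BZᵀ := by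
      rw [← Matrix.mul_assoc, hM2, Matrix.sub_mul, Matrix.one_mul,
          Matrix.mul_assoc (DZ + DZᵀ)⁻¹ DZᵀ, ← Matrix.mul_assoc DZᵀ (DZᵀ)⁻¹, h2t, Matrix.one_mul]
    have d2 : DZᵀ * ((DZᵀ)⁻¹ * BZᵀ - (DZ + DZᵀ)⁻¹ * BZᵀ) =
        DZ * ((DZ + DZᵀ)⁻¹ * BZᵀ) := by
      rw [Matrix.mul_sub, ← Matrix.mul_assoc DZᵀ (DZᵀ)⁻¹, h2t, Matrix.one_mul,
          ← Matrix.mul_assoc DZᵀ, hM1, Matrix.sub_mul, Matrix.one_mul, Matrix.mul_assoc,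
          sub_sub_cancel]
    rw [d1, d2, ← Matrix.mul_assoc DZ⁻¹ DZ, h1, Matrix.one_mul]
  -- block 21
  have h21 : -((-(DZ⁻¹ * CZ))ᵀ * (DZ⁻¹ + (DZ⁻¹)ᵀ)⁻¹ * (-(DZ⁻¹ * CZ))) =
      -(CZᵀ * (DZ + DZᵀ)⁻¹ * CZ) := by
    rw [hKey, Matrix.transpose_neg, Matrix.transpose_mul, hit]
    simp only [Matrix.neg_mul, Matrix.mul_neg, neg_neg, Matrix.mul_assoc]
    rw [cDC, ← Matrix.mul_assoc (DZᵀ)⁻¹ DZᵀ, h1t, Matrix.one_mul]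
  rw [h11, h12, h21]
end

section
/- Let A = Aᵀ ∈ ℝ^{n×n} and P = Pᵀ ∈ ℝ^{n×n}, and let H be the block matrix [[A−P, P], [−P, −A+P]]. Then H is similar (via T = [[I,0],[I,I]]) to [[A, P],[−2A, −A]], and H² is similar to the block upper-triangular matrix [[A²−2PA, AP−PA],[0, A²−2AP]]. Consequently every eigenvalue of H² is an eigenvalue of A² − 2AP. -/
open Matrix

/-- For symmetric `A, P`, the Hamiltonian `H = [[A−P,P],[−P,−A+P]]` is similar via
`T = [[I,0],[I,I]]` to `[[A,P],[−2A,−A]]`, `H²` is similar to the block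
upper-triangular matrix `[[A²−2PA, AP−PA],[0, A²−2AP]]`, and every eigenvalue of
`H²` is an eigenvalue of `A² − 2AP`. -/
theorem stmt12 (n : ℕ) (A P : Matrix (Fin n) (Fin n) ℝ) (hA : Aᵀ = A) (hP : Pᵀ = P) :
    (Matrix.fromBlocks 1 0 (-1) 1 *
        Matrix.fromBlocks (A - P) P (-P) (-A + P) * Matrix.fromBlocks 1 0 1 1 =
      Matrix.fromBlocks A P (-(2 * A)) (-A)) ∧
    (Matrix.fromBlocks 1 0 (-1) 1 *
        (Matrix.fromBlocks (A - P) P (-P) (-A + P)) ^ 2 * Matrix.fromBlocks 1 0 1 1 =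
      Matrix.fromBlocks (A ^ 2 - 2 * (P * A)) (A * P - P * A) 0 (A ^ 2 - 2 * (A * P))) ∧
    (∀ μ : ℂ,
      μ ∈ spectrum ℂ
        (((Matrix.fromBlocks (A - P) P (-P) (-A + P)) ^ 2).map Complex.ofReal) →
      μ ∈ spectrum ℂ ((A ^ 2 - 2 * (A * P)).map Complex.ofReal)) := by
  set H : Matrix (Fin n ⊕ Fin n) (Fin n ⊕ Fin n) ℝ :=
    Matrix.fromBlocks (A - P) P (-P) (-A + P) with hH
  set L : Matrix (Fin n ⊕ Fin n) (Fin n ⊕ Fin n) ℝ := Matrix.fromBlocks 1 0 (-1) 1 with hL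
  set R : Matrix (Fin n ⊕ Fin n) (Fin n ⊕ Fin n) ℝ := Matrix.fromBlocks 1 0 1 1 with hR
  have hRL : R * L = 1 := by
    rw [hR, hL, Matrix.fromBlocks_multiply, ← Matrix.fromBlocks_one, Matrix.fromBlocks_inj]
    refine ⟨by noncomm_ring, by noncomm_ring, by noncomm_ring, by noncomm_ring⟩
  have h1 : L * H * R = Matrix.fromBlocks A P (-(2 * A)) (-A) := by
    rw [hH, hL, hR, Matrix.fromBlocks_multiply, Matrix.fromBlocks_multiply,
      Matrix.fromBlocks_inj]
    refine ⟨by noncomm_ring, by noncomm_ring, by noncomm_ring, by noncomm_ring⟩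
  have h2 : L * H ^ 2 * R =
      Matrix.fromBlocks (A ^ 2 - 2 * (P * A)) (A * P - P * A) 0 (A ^ 2 - 2 * (A * P)) := by
    have key : L * H ^ 2 * R = (L * H * R) * (L * H * R) := by
      rw [pow_two]
      calc L * (H * H) * R = (L * H) * (R * L) * (H * R) := by rw [hRL]; noncomm_ring
        _ = (L * H * R) * (L * H * R) := by noncomm_ring
    rw [key, h1, Matrix.fromBlocks_multiply, Matrix.fromBlocks_inj]
    refine ⟨by noncomm_ring, by noncomm_ring, by noncomm_ring, by noncomm_ring⟩
  refine ⟨h1, h2, ?_⟩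
  intro μ hμ
  rw [spectrum.mem_iff] at hμ ⊢
  intro hu
  apply hμ
  rw [Matrix.isUnit_iff_isUnit_det] at hu ⊢
  have hLR : L * R = 1 := mul_eq_one_comm.mp hRL
  have mm : ∀ (M N : Matrix (Fin n ⊕ Fin n) (Fin n ⊕ Fin n) ℝ),
      (M * N).map Complex.ofReal = M.map Complex.ofReal * N.map Complex.ofReal :=
    fun M N => Matrix.map_mul (f := Complex.ofRealHom)
  set L' := L.map Complex.ofReal with hL'
  set R' := R.map Complex.ofReal with hR'
  set B : Matrix (Fin n) (Fin n) ℂ := (A ^ 2 - 2 * (A * P)).map Complex.ofReal with hB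
  set B' : Matrix (Fin n) (Fin n) ℂ := (A ^ 2 - 2 * (P * A)).map Complex.ofReal with hB'
  set C : Matrix (Fin n) (Fin n) ℂ := (A * P - P * A).map Complex.ofReal with hC
  have hone : (1 : Matrix (Fin n ⊕ Fin n) (Fin n ⊕ Fin n) ℝ).map Complex.ofReal = 1 := by
    ext i j; by_cases h : i = j <;> simp [Matrix.one_apply, h]
  have hL'R' : L' * R' = 1 := by rw [hL', hR', ← mm, hLR, hone]
  have hR'L' : R' * L' = 1 := by rw [hL', hR', ← mm, hRL, hone]
  have hLC : L' * ((H ^ 2).map Complex.ofReal) * R' = Matrix.fromBlocks B' C 0 B := by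
    rw [hL', hR', ← mm, ← mm, h2, Matrix.fromBlocks_map, hB, hB', hC]
    congr 1
  -- conjugate the resolvent
  set M := (H ^ 2).map Complex.ofReal with hM
  have hconj : L' * (algebraMap ℂ (Matrix (Fin n ⊕ Fin n) (Fin n ⊕ Fin n) ℂ) μ - M) * R'
      = Matrix.fromBlocks
          (algebraMap ℂ (Matrix (Fin n) (Fin n) ℂ) μ - B') (-C) 0
          (algebraMap ℂ (Matrix (Fin n) (Fin n) ℂ) μ - B) := by
    rw [Matrix.mul_sub, Matrix.sub_mul, hLC]
    rw [Algebra.algebraMap_eq_smul_one, Algebra.algebraMap_eq_smul_one]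
    rw [Matrix.mul_smul, Matrix.mul_one, Matrix.smul_mul, hL'R']
    rw [← Matrix.fromBlocks_one, Matrix.fromBlocks_smul]
    ext i j
    rcases i with i | i <;> rcases j with j | j <;> simp [Matrix.sub_apply]
  have hdet : ((algebraMap ℂ (Matrix (Fin n ⊕ Fin n) (Fin n ⊕ Fin n) ℂ)) μ - M).det
      = ((algebraMap ℂ (Matrix (Fin n) (Fin n) ℂ)) μ - B').det
        * ((algebraMap ℂ (Matrix (Fin n) (Fin n) ℂ)) μ - B).det := by
    have h := congrArg Matrix.det hconj
    rw [Matrix.det_mul, Matrix.det_mul, Matrix.det_fromBlocks_zero₂₁] at h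
    have hdetLR : L'.det * R'.det = 1 := by
      rw [← Matrix.det_mul, hL'R', Matrix.det_one]
    calc ((algebraMap ℂ (Matrix (Fin n ⊕ Fin n) (Fin n ⊕ Fin n) ℂ)) μ - M).det
        = L'.det * ((algebraMap ℂ (Matrix (Fin n ⊕ Fin n) (Fin n ⊕ Fin n) ℂ)) μ - M).det
            * R'.det := by rw [mul_comm L'.det, mul_assoc, hdetLR, mul_one]
      _ = _ := by rw [h]
  have e : (A ^ 2 - 2 * (P * A))ᵀ = A ^ 2 - 2 * (A * P) := by
    rw [show (2 : Matrix (Fin n) (Fin n) ℝ) * (P * A) = P * A + P * A from two_mul _,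
      show (2 : Matrix (Fin n) (Fin n) ℝ) * (A * P) = A * P + A * P from two_mul _,
      Matrix.transpose_sub, Matrix.transpose_add, Matrix.transpose_mul, Matrix.transpose_pow,
      hA, hP]
  have hBt : B'ᵀ = B := by
    rw [hB', hB, ← Matrix.transpose_map, e]
  have halg : ((algebraMap ℂ (Matrix (Fin n) (Fin n) ℂ)) μ)ᵀ
      = (algebraMap ℂ (Matrix (Fin n) (Fin n) ℂ)) μ := by
    simp [Algebra.algebraMap_eq_smul_one]
  have hBB' : (algebraMap ℂ (Matrix (Fin n) (Fin n) ℂ) μ - B').det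
      = (algebraMap ℂ (Matrix (Fin n) (Fin n) ℂ) μ - B).det := by
    rw [← Matrix.det_transpose (algebraMap ℂ (Matrix (Fin n) (Fin n) ℂ) μ - B'),
      Matrix.transpose_sub, halg, hBt]
  exfalso
  apply hμ
  rw [Matrix.isUnit_iff_isUnit_det, hdet, hBB']
  exact hu.mul hu
end

section
/- Let (A, B, C, D) be a symmetric state-space realization (A = Aᵀ negative definite, B = Cᵀ, D = Dᵀ with D + Dᵀ positive definite) of a strictly passive system. Then all eigenvalues of the Hamiltonian matrix H = [[A − B(D+Dᵀ)^{-1}C, B(D+Dᵀ)^{-1}Bᵀ], [−Cᵀ(D+Dᵀ)^{-1}C, −(A − B(D+Dᵀ)^{-1}C)ᵀ]] satisfy: their squares are real. If additionally H has no purely imaginary eigenvalues, then all eigenvalues of H are real. -/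
/-!
With `F = B (D + Dᵀ)⁻¹ Bᵀ ⪰ 0` and `E = A - F`, the Hamiltonian is `H = [[E, F], [-F, -E]]`.
If `H (x, y) = μ (x, y)`, then `u = x + y` and `w = x - y` satisfy `(F - E) w = -μ u` and
`-(E + F) u = -μ w`, so `μ²` is an eigenvalue of the product of the positive definite matrices
`F - E = 2F - A` and `-(E + F) = -A`. Such an eigenvalue is positive, since
`⟪Qu, PQu⟫ = μ² ⟪u, Qu⟫`; hence `μ² > 0` and `μ` is real.
-/

open Matrix
open scoped ComplexOrder

namespace Matrix

variable {n : Type*} [Fintype n]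

open scoped MatrixOrder in
theorem PosDef.map_ofReal [DecidableEq n] {P : Matrix n n ℝ} (hP : P.PosDef) :
    (P.map Complex.ofReal).PosDef := by
  obtain ⟨L, hL, rfl⟩ :=
    CStarAlgebra.isStrictlyPositive_iff_eq_star_mul_self.mp hP.isStrictlyPositive
  have hmap :
      (star L * L).map Complex.ofReal = (L.map Complex.ofReal)ᴴ * L.map Complex.ofReal := by
    rw [← conjTranspose_map _ fun x => (Complex.conj_ofReal x).symm, ← star_eq_conjTranspose]
    exact Matrix.map_mul (f := Complex.ofRealHom)
  rw [hmap]
  exact .conjTranspose_mul_self _ <|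
    mulVec_injective_iff_isUnit.mpr <| hL.map Complex.ofRealHom.mapMatrix

variable {𝕜 : Type*} [RCLike 𝕜]

theorem PosDef.pos_of_mulVec_mulVec_eq_smul {P Q : Matrix n n 𝕜} (hP : P.PosDef)
    (hQ : Q.PosDef) {v : n → 𝕜} (hv : v ≠ 0) {μ : 𝕜} (h : P *ᵥ Q *ᵥ v = μ • v) : 0 < μ := by
  set w := Q *ᵥ v
  have hβ : 0 < star v ⬝ᵥ w := hQ.dotProduct_mulVec_pos hv
  have hw : w ≠ 0 := by rintro hw; simp [hw] at hβ
  have hα : 0 < star w ⬝ᵥ P *ᵥ w := hP.dotProduct_mulVec_pos hw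
  have hwv : star w ⬝ᵥ v = star v ⬝ᵥ w := by
    rw [star_mulVec, hQ.isHermitian.eq, ← dotProduct_mulVec]
  rw [h, dotProduct_smul, smul_eq_mul, hwv] at hα
  simpa [mul_inv_cancel_right₀ hβ.ne'] using mul_pos hα (RCLike.inv_pos.mpr hβ)

theorem sq_pos_of_fromBlocks_mulVec_eq_smul [DecidableEq n] {E F : Matrix n n 𝕜}
    (hP : (F - E).PosDef) (hQ : (-(E + F)).PosDef) {v : n ⊕ n → 𝕜} (hv : v ≠ 0) {μ : 𝕜}
    (h : fromBlocks E F (-F) (-E) *ᵥ v = μ • v) : 0 < μ ^ 2 := by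
  set x := v ∘ Sum.inl
  set y := v ∘ Sum.inr
  rw [fromBlocks_mulVec] at h
  have h₁ : E *ᵥ x + F *ᵥ y = μ • x := congrArg (· ∘ Sum.inl) h
  have h₂ : -F *ᵥ x + -E *ᵥ y = μ • y := congrArg (· ∘ Sum.inr) h
  have hw : (F - E) *ᵥ (x - y) = -μ • (x + y) := by
    simp only [sub_mulVec, mulVec_sub, neg_mulVec] at h₂ ⊢
    linear_combination (norm := module) -h₁ - h₂
  have hu : -(E + F) *ᵥ (x + y) = -μ • (x - y) := by
    simp only [add_mulVec, mulVec_add, neg_mulVec] at h₂ ⊢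
    linear_combination (norm := module) -h₁ + h₂
  have hu₀ : x + y ≠ 0 := by
    intro hu₀
    have hw₀ : x - y = 0 := mulVec_injective_iff_isUnit.mpr hP.isUnit <| by
      rw [hw, hu₀, smul_zero, mulVec_zero]
    have hx : x = 0 := by
      have : (2 : 𝕜) • x = 0 := by linear_combination (norm := module) hu₀ + hw₀
      simpa using this
    have hy : y = 0 := by linear_combination (norm := module) hu₀ - hx
    exact hv (funext <| Sum.rec (congrFun hx) (congrFun hy))
  refine hP.pos_of_mulVec_mulVec_eq_smul hQ hu₀ ?_
  rw [hu, mulVec_smul, hw, smul_smul]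
  ring_nf

theorem exists_mulVec_eq_smul_of_mem_spectrum {K : Type*} [Field K] [DecidableEq n]
    {M : Matrix n n K} {μ : K} (h : μ ∈ spectrum K M) : ∃ v ≠ 0, M *ᵥ v = μ • v := by
  rw [← spectrum_toLin', ← Module.End.hasEigenvalue_iff_mem_spectrum] at h
  obtain ⟨v, hv⟩ := h.exists_hasEigenvector
  exact ⟨v, hv.2, by simpa using hv.apply_eq_smul⟩

end Matrix

theorem Complex.im_eq_zero_of_sq_pos {z : ℂ} (hz : 0 < z ^ 2) : z.im = 0 := by
  obtain ⟨hre, him⟩ := Complex.pos_iff.mp hz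
  simp only [sq, Complex.mul_re, Complex.mul_im] at hre him
  rcases mul_eq_zero.mp (show z.re * z.im = 0 by linarith) with h | h
  · nlinarith [sq_nonneg z.im]
  · exact h

theorem stmt14_general (n m : ℕ) (A : Matrix (Fin n) (Fin n) ℝ) (B : Matrix (Fin n) (Fin m) ℝ)
    (C : Matrix (Fin m) (Fin n) ℝ) (D : Matrix (Fin m) (Fin m) ℝ)
    (hA : A.IsSymm) (hAneg : (-A).PosDef) (hC : C = Bᵀ)
    (hDD : (D + Dᵀ).PosDef) :
    let H := Matrix.fromBlocks (A - B * (D + Dᵀ)⁻¹ * C) (B * (D + Dᵀ)⁻¹ * Bᵀ)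
        (-(Cᵀ * (D + Dᵀ)⁻¹ * C)) (-(A - B * (D + Dᵀ)⁻¹ * C)ᵀ)
    (∀ μ ∈ spectrum ℂ (H.map Complex.ofReal), (μ ^ 2).im = 0) ∧
    ((∀ μ ∈ spectrum ℂ (H.map Complex.ofReal), μ.re ≠ 0) →
      ∀ μ ∈ spectrum ℂ (H.map Complex.ofReal), μ.im = 0) := by
  intro H
  set F := B * (D + Dᵀ)⁻¹ * Bᵀ
  have hF : F.PosSemidef := by
    simpa using hDD.inv.posSemidef.mul_mul_conjTranspose_same B
  have hH : H = fromBlocks (A - F) F (-F) (-(A - F)) := by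
    have hFsymm : Fᵀ = F := by
      simpa [conjTranspose_eq_transpose_of_trivial] using hF.isHermitian.eq
    simp only [H, hC, transpose_transpose, transpose_sub, hA.eq]
    rw [show (B * (D + Dᵀ)⁻¹ * Bᵀ)ᵀ = F from hFsymm]
  have hreal : ∀ μ ∈ spectrum ℂ (H.map Complex.ofReal), μ.im = 0 := by
    intro μ hμ
    obtain ⟨v, hv, hHv⟩ := exists_mulVec_eq_smul_of_mem_spectrum hμ
    rw [hH, fromBlocks_map, Matrix.map_neg _ Complex.ofReal_neg,
      Matrix.map_neg _ Complex.ofReal_neg] at hHv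
    refine Complex.im_eq_zero_of_sq_pos (sq_pos_of_fromBlocks_mulVec_eq_smul ?_ ?_ hv hHv)
    · rw [← Matrix.map_sub _ Complex.ofReal_sub, show F - (A - F) = F + F + -A by abel]
      exact (PosDef.posSemidef_add (hF.add hF) hAneg).map_ofReal
    · rw [← Matrix.map_add _ Complex.ofReal_add, ← Matrix.map_neg _ Complex.ofReal_neg,
        sub_add_cancel]
      exact hAneg.map_ofReal
  exact ⟨fun μ hμ => by simp [sq, hreal μ hμ], fun _ => hreal⟩

/-- For a symmetric state-space realization (`A` symmetric negative definite,
`C = Bᵀ`, `D` symmetric with `D + Dᵀ ≻ 0`), the squares of the eigenvalues of the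
Hamiltonian matrix `H` are real; if moreover `H` has no purely imaginary
eigenvalues, then all its eigenvalues are real. -/
theorem stmt14 (n m : ℕ) (A : Matrix (Fin n) (Fin n) ℝ) (B : Matrix (Fin n) (Fin m) ℝ)
    (C : Matrix (Fin m) (Fin n) ℝ) (D : Matrix (Fin m) (Fin m) ℝ)
    (hA : A.IsSymm) (hAneg : (-A).PosDef) (hC : C = Bᵀ) (hD : Dᵀ = D)
    (hDD : (D + Dᵀ).PosDef) :
    let H := Matrix.fromBlocks (A - B * (D + Dᵀ)⁻¹ * C) (B * (D + Dᵀ)⁻¹ * Bᵀ)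
        (-(Cᵀ * (D + Dᵀ)⁻¹ * C)) (-(A - B * (D + Dᵀ)⁻¹ * C)ᵀ)
    (∀ μ ∈ spectrum ℂ (H.map Complex.ofReal), (μ ^ 2).im = 0) ∧
    ((∀ μ ∈ spectrum ℂ (H.map Complex.ofReal), μ.re ≠ 0) →
      ∀ μ ∈ spectrum ℂ (H.map Complex.ofReal), μ.im = 0) :=
  stmt14_general n m A B C D hA hAneg hC hDD
end

section
/- Let P, M ∈ ℝ^{n×n} be symmetric with P positive definite and M positive semidefinite. Then the ordered eigenvalues of P(P+M) (which are real) satisfy λ_i(P)² ≤ λ_i(P(P+M)) ≤ λ_i(P+M)² for each i = 1,…,n. -/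
/-!
With `Q = P + M`, the product `P Q` has the same characteristic polynomial as the symmetric
matrices `√P Q √P = P² + √P M √P` and `√Q P √Q = Q² - √Q M √Q`, so in the Loewner order it sits
between `P²` and `Q²`. Weyl's monotonicity principle (`A ⪯ B` implies `λᵢ(A) ≤ λᵢ(B)`, by a
Courant–Fischer dimension count) then compares the ordered eigenvalues.
-/

open Matrix Polynomial
open scoped RealInnerProductSpace

theorem Fintype.exists_perm_eq_comp_of_map_univ_eq {ι α : Type*} [Fintype ι] [DecidableEq α]
    {f g : ι → α} (h : Finset.univ.val.map f = Finset.univ.val.map g) :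
    ∃ σ : Equiv.Perm ι, f = g ∘ σ := by
  have hfiber (r : α) : Fintype.card {i // f i = r} = Fintype.card {i // g i = r} := by
    have := congrArg (Multiset.count r) h
    simp only [Multiset.count_map] at this
    simpa [Fintype.card_subtype, Finset.card, Finset.filter_val, eq_comm] using this
  exact ⟨(Equiv.sigmaFiberEquiv f).symm.trans ((Equiv.sigmaCongrRight fun r =>
    Fintype.equivOfCardEq (hfiber r)).trans (Equiv.sigmaFiberEquiv g)),
    funext fun i => (Fintype.equivOfCardEq (hfiber (f i)) ⟨i, rfl⟩).2.symm⟩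

theorem Matrix.IsHermitian.exists_orthonormalBasis_apply_eq_smul {ι : Type*} [Fintype ι]
    [DecidableEq ι] {A : Matrix ι ι ℝ} (hA : A.IsHermitian) {a : ι → ℝ}
    (h : A.charpoly = ∏ i, (X - C (a i))) :
    ∃ u : OrthonormalBasis ι ℝ (EuclideanSpace ℝ ι), ∀ j, A.toEuclideanLin (u j) = a j • u j := by
  have hroots : Finset.univ.val.map a = Finset.univ.val.map hA.eigenvalues := by
    have := hA.roots_charpoly_eq_eigenvalues
    rw [h, roots_prod] at this
    · simpa using this
    · simp [Finset.prod_ne_zero_iff, X_sub_C_ne_zero]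
  obtain ⟨σ, rfl⟩ := Fintype.exists_perm_eq_comp_of_map_univ_eq hroots
  refine ⟨hA.eigenvectorBasis.reindex σ.symm, fun j => ?_⟩
  apply WithLp.ofLp_injective
  simpa using hA.mulVec_eigenvectorBasis (σ j)

section InnerProductSpace

variable {ι E : Type*} [Fintype ι] [NormedAddCommGroup E] [InnerProductSpace ℝ E]

namespace OrthonormalBasis

variable (u : OrthonormalBasis ι ℝ E)

theorem inner_eq_zero_of_mem_span_image {s : Set ι} {j : ι} (hj : j ∉ s) {x : E}
    (hx : x ∈ Submodule.span ℝ (u '' s)) : ⟪u j, x⟫ = 0 := by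
  have hle : Submodule.span ℝ (u '' s) ≤ LinearMap.ker (innerₛₗ ℝ (u j)) := by
    rw [Submodule.span_le]
    rintro _ ⟨k, hk, rfl⟩
    exact u.orthonormal.inner_eq_zero (ne_of_mem_of_not_mem hk hj).symm
  exact hle hx

theorem finrank_span_image_finset (s : Finset ι) :
    Module.finrank ℝ (Submodule.span ℝ (u '' s)) = s.card := by
  have := finrank_span_eq_card
    ((u.orthonormal.comp ((↑) : s → ι) Subtype.val_injective).linearIndependent)
  have hrange : Set.range (u ∘ ((↑) : s → ι)) = u '' s := by
    rw [Set.range_comp, Subtype.range_coe]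
  rwa [hrange, Fintype.card_coe] at this

end OrthonormalBasis

namespace LinearMap.IsSymmetric

variable {T : E →ₗ[ℝ] E} (hT : T.IsSymmetric) {u : OrthonormalBasis ι ℝ E} {a : ι → ℝ}
  (hu : ∀ j, T (u j) = a j • u j)
include hT hu

theorem inner_apply_self_eq_sum (x : E) : ⟪x, T x⟫ = ∑ j, a j * ⟪u j, x⟫ ^ 2 := by
  rw [← u.sum_inner_mul_inner]
  refine Finset.sum_congr rfl fun j _ => ?_
  rw [← hT, hu, real_inner_smul_left, real_inner_comm]
  ring

theorem mul_norm_sq_le_inner_apply_self {s : Set ι} {c : ℝ} (hc : ∀ j ∈ s, c ≤ a j) {x : E}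
    (hx : x ∈ Submodule.span ℝ (u '' s)) : c * ‖x‖ ^ 2 ≤ ⟪x, T x⟫ := by
  rw [hT.inner_apply_self_eq_sum hu, ← u.sum_sq_inner_right, Finset.mul_sum]
  refine Finset.sum_le_sum fun j _ => ?_
  by_cases hj : j ∈ s
  · exact mul_le_mul_of_nonneg_right (hc j hj) (sq_nonneg _)
  · simp [u.inner_eq_zero_of_mem_span_image hj hx]

theorem inner_apply_self_le_mul_norm_sq {s : Set ι} {c : ℝ} (hc : ∀ j ∈ s, a j ≤ c) {x : E}
    (hx : x ∈ Submodule.span ℝ (u '' s)) : ⟪x, T x⟫ ≤ c * ‖x‖ ^ 2 := by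
  rw [hT.inner_apply_self_eq_sum hu, ← u.sum_sq_inner_right, Finset.mul_sum]
  refine Finset.sum_le_sum fun j _ => ?_
  by_cases hj : j ∈ s
  · exact mul_le_mul_of_nonneg_right (hc j hj) (sq_nonneg _)
  · simp [u.inner_eq_zero_of_mem_span_image hj hx]

end LinearMap.IsSymmetric

theorem LinearMap.eigenvalue_le_of_le {n : ℕ} {T S : E →ₗ[ℝ] E} (hT : T.IsSymmetric) (hTS : T ≤ S)
    {u v : OrthonormalBasis (Fin n) ℝ E} {a b : Fin n → ℝ} (ha : Monotone a) (hb : Monotone b)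
    (hu : ∀ j, T (u j) = a j • u j) (hv : ∀ j, S (v j) = b j • v j) (i : Fin n) : a i ≤ b i := by
  classical
  have := Module.Finite.of_basis u.toBasis
  have hS : S.IsSymmetric := by simpa using hT.add hTS.isSymmetric
  set V := Submodule.span ℝ (u '' ↑(Finset.Ici i))
  set W := Submodule.span ℝ (v '' ↑(Finset.Iic i))
  have hVW : ¬Disjoint V W := by
    intro hdisj
    have := Submodule.finrank_add_finrank_le_of_disjoint hdisj
    rw [u.finrank_span_image_finset, v.finrank_span_image_finset, Fin.card_Ici, Fin.card_Iic,
      Module.finrank_eq_card_basis u.toBasis, Fintype.card_fin] at this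
    omega
  obtain ⟨x, ⟨hxV, hxW⟩, hx⟩ := Submodule.exists_mem_ne_zero_of_ne_bot (by
    rwa [disjoint_iff] at hVW)
  have hx2 : 0 < ‖x‖ ^ 2 := by positivity
  have hquad : ⟪x, T x⟫ ≤ ⟪x, S x⟫ := by
    have := hTS.inner_nonneg_right x
    rw [LinearMap.sub_apply, inner_sub_right] at this
    linarith
  have hlow := hT.mul_norm_sq_le_inner_apply_self hu
    (fun j hj => ha (Finset.mem_Ici.mp hj)) hxV
  have hup := hS.inner_apply_self_le_mul_norm_sq hv
    (fun j hj => hb (Finset.mem_Iic.mp hj)) hxW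
  nlinarith

theorem LinearMap.IsPositive.nonneg_of_apply_eq_smul {T : E →ₗ[ℝ] E} (hT : T.IsPositive)
    {x : E} (hx : x ≠ 0) {c : ℝ} (h : T x = c • x) : 0 ≤ c := by
  have := hT.inner_nonneg_right x
  rw [h, real_inner_smul_right, real_inner_self_eq_norm_sq] at this
  exact nonneg_of_mul_nonneg_left this (by positivity)

end InnerProductSpace

section StarOrderedRing

variable {R : Type*} [NonUnitalRing R] [PartialOrder R] [StarRing R] [StarOrderedRing R]
  {a m s : R}

theorem mul_self_le_conjugate_add (hs : IsSelfAdjoint s) (hsa : s * s = a) (hm : 0 ≤ m) :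
    a * a ≤ s * (a + m) * s := by
  have : s * (a + m) * s = a * a + s * m * s := by
    rw [← hsa]; simp only [mul_add, add_mul, mul_assoc]
  rw [this]
  exact le_add_of_nonneg_right (hs.conjugate_nonneg hm)

theorem conjugate_sub_le_mul_self (hs : IsSelfAdjoint s) (hsa : s * s = a) (hm : 0 ≤ m) :
    s * (a - m) * s ≤ a * a := by
  have : s * (a - m) * s = a * a - s * m * s := by
    rw [← hsa]; simp only [mul_sub, sub_mul, mul_assoc]
  rw [this]
  exact sub_le_self _ (hs.conjugate_nonneg hm)

end StarOrderedRing

namespace Matrix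

open scoped ComplexOrder MatrixOrder

variable {ι 𝕜 : Type*} [Fintype ι] [DecidableEq ι] [RCLike 𝕜]

theorem PosSemidef.exists_isSelfAdjoint_mul_self_eq {A : Matrix ι ι 𝕜} (hA : A.PosSemidef) :
    ∃ s : Matrix ι ι 𝕜, IsSelfAdjoint s ∧ s * s = A :=
  ⟨CFC.sqrt A, (CFC.sqrt_nonneg A).isSelfAdjoint, CFC.sqrt_mul_sqrt_self A hA.nonneg⟩

theorem toEuclideanLin_mul_self_apply_of_apply_eq_smul {A : Matrix ι ι 𝕜}
    {x : EuclideanSpace 𝕜 ι} {c : 𝕜} (h : A.toEuclideanLin x = c • x) :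
    (A * A).toEuclideanLin x = c ^ 2 • x := by
  simp [h, smul_smul, sq]

theorem PosSemidef.monotone_sq_of_apply_eq_smul [Preorder ι] {A : Matrix ι ι ℝ}
    (hA : A.PosSemidef) {u : OrthonormalBasis ι ℝ (EuclideanSpace ℝ ι)} {a : ι → ℝ}
    (ha : Monotone a) (hu : ∀ j, A.toEuclideanLin (u j) = a j • u j) : Monotone (a · ^ 2) :=
  fun i _ hij => pow_le_pow_left₀ ((isPositive_toEuclideanLin_iff.mpr hA).nonneg_of_apply_eq_smul
    (u.orthonormal.ne_zero i) (hu i)) (ha hij) 2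

theorem IsHermitian.eigenvalue_le_of_le {n : ℕ} {A B : Matrix (Fin n) (Fin n) ℝ}
    (hA : A.IsHermitian) (hAB : A ≤ B) {u v : OrthonormalBasis (Fin n) ℝ (EuclideanSpace ℝ (Fin n))}
    {a b : Fin n → ℝ} (ha : Monotone a) (hb : Monotone b)
    (hu : ∀ j, A.toEuclideanLin (u j) = a j • u j) (hv : ∀ j, B.toEuclideanLin (v j) = b j • v j)
    (i : Fin n) : a i ≤ b i :=
  LinearMap.eigenvalue_le_of_le (isSymmetric_toEuclideanLin_iff.mpr hA)
    (by rwa [LinearMap.le_def, ← map_sub, isPositive_toEuclideanLin_iff]) ha hb hu hv i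

end Matrix

open scoped MatrixOrder

/-- For `P ≻ 0` and `M ⪰ 0` symmetric, the ordered (real) eigenvalues of `P(P+M)`
satisfy `λ_i(P)² ≤ λ_i(P(P+M)) ≤ λ_i(P+M)²`. -/
theorem stmt17 (n : ℕ) (P M : Matrix (Fin n) (Fin n) ℝ)
    (hP : P.PosDef) (hM : M.PosSemidef)
    (lP lQ lR : Fin n → ℝ)
    (hlP : Monotone lP) (hlQ : Monotone lQ) (hlR : Monotone lR)
    (hcP : P.charpoly = ∏ i, (X - Polynomial.C (lP i)))
    (hcQ : (P + M).charpoly = ∏ i, (X - Polynomial.C (lQ i)))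
    (hcR : (P * (P + M)).charpoly = ∏ i, (X - Polynomial.C (lR i))) :
    ∀ i, (lP i) ^ 2 ≤ lR i ∧ lR i ≤ (lQ i) ^ 2 := by
  have hQ : (P + M).PosSemidef := hP.posSemidef.add hM
  obtain ⟨sP, hsP, hsPP⟩ := hP.posSemidef.exists_isSelfAdjoint_mul_self_eq
  obtain ⟨sQ, hsQ, hsQQ⟩ := hQ.exists_isSelfAdjoint_mul_self_eq
  have hcR₁ : (sP * (P + M) * sP).charpoly = ∏ i, (X - C (lR i)) := by
    rw [charpoly_mul_comm, ← mul_assoc, hsPP, hcR]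
  have hcR₂ : (sQ * P * sQ).charpoly = ∏ i, (X - C (lR i)) := by
    rw [charpoly_mul_comm, ← mul_assoc, hsQQ, charpoly_mul_comm, hcR]
  obtain ⟨uP, huP⟩ := hP.isHermitian.exists_orthonormalBasis_apply_eq_smul hcP
  obtain ⟨uQ, huQ⟩ := hQ.isHermitian.exists_orthonormalBasis_apply_eq_smul hcQ
  have hS₁ : (sP * (P + M) * sP).IsHermitian := IsSelfAdjoint.conjugate_self hQ.isHermitian hsP
  have hS₂ : (sQ * P * sQ).IsHermitian := IsSelfAdjoint.conjugate_self hP.isHermitian hsQ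
  obtain ⟨u₁, hu₁⟩ := hS₁.exists_orthonormalBasis_apply_eq_smul hcR₁
  obtain ⟨u₂, hu₂⟩ := hS₂.exists_orthonormalBasis_apply_eq_smul hcR₂
  have hPP : (P * P).IsHermitian := by simpa only [sq] using hP.isHermitian.pow 2
  refine fun i => ⟨?_, ?_⟩
  · exact hPP.eigenvalue_le_of_le (mul_self_le_conjugate_add hsP hsPP hM.nonneg)
      (hP.posSemidef.monotone_sq_of_apply_eq_smul hlP huP) hlR
      (fun j => toEuclideanLin_mul_self_apply_of_apply_eq_smul (huP j)) hu₁ i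
  · exact hS₂.eigenvalue_le_of_le (by simpa using conjugate_sub_le_mul_self hsQ hsQQ hM.nonneg)
      hlR (hQ.monotone_sq_of_apply_eq_smul hlQ huQ) hu₂
      (fun j => toEuclideanLin_mul_self_apply_of_apply_eq_smul (huQ j)) i
end

section
/- Let A ∈ ℝ^{n×n} be symmetric with distinct eigenvalues, B ∈ ℝ^{n×m}, D ∈ ℝ^{m×m} symmetric positive definite. Suppose the minimum gap between consecutive eigenvalues of A exceeds λ_max(B D^{-1} Bᵀ), and that Bᵀx ≠ 0 for every eigenvector x of A. Then the eigenvalues of A and of A − B D^{-1} Bᵀ strictly interlace: λ_i(A − BD^{-1}Bᵀ) < λ_i(A) < λ_{i+1}(A − BD^{-1}Bᵀ) for i = 1,…,n−1 (and λ_n(A−BD^{-1}Bᵀ) < λ_n(A)). In particular the eigenvalues of A − BD^{-1}Bᵀ are distinct. -/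
/-!
Both inequalities are instances of the Courant–Fischer principle. Counting dimensions, for each
`j` there is a nonzero `x` orthogonal to the eigenvectors of `A` above index `j` and to those of
`A - M` below `j`, where `M = BD⁻¹Bᵀ ≥ 0`; its Rayleigh quotients are squeezed as
`λ_j(A - M) ≤ R_{A-M}(x) ≤ R_A(x) ≤ λ_j(A)`. Equality throughout would make `x` an eigenvector
of `A`, on which `M` is positive by controllability, so `λ_j(A - M) < λ_j(A)`. The same squeeze
with the roles of `A` and `A - M` exchanged gives Weyl's bound `λ_j(A) ≤ λ_j(A - M) + λ_max(M)`,
which the gap hypothesis turns into `λ_{j-1}(A) < λ_j(A - M)`.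
-/

open Matrix Polynomial
open scoped RealInnerProductSpace

section Eigenbasis

variable {E : Type*} [NormedAddCommGroup E] [InnerProductSpace ℝ E]
  {ι : Type*} [Fintype ι] {T : E →ₗ[ℝ] E} {b : OrthonormalBasis ι ℝ E} {l : ι → ℝ}

theorem map_eq_sum_of_eigenbasis (hb : ∀ i, T (b i) = l i • b i) (x : E) :
    T x = ∑ i, (l i * ⟪b i, x⟫) • b i := by
  conv_lhs => rw [← b.sum_repr' x]
  simp only [map_sum, map_smul, hb, smul_smul, mul_comm]

theorem inner_map_self_eq_sum_of_eigenbasis (hb : ∀ i, T (b i) = l i • b i) (x : E) :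
    ⟪T x, x⟫ = ∑ i, l i * ⟪b i, x⟫ ^ 2 := by
  rw [map_eq_sum_of_eigenbasis hb, sum_inner]
  refine Finset.sum_congr rfl fun i _ => ?_
  rw [real_inner_smul_left]
  ring

theorem inner_map_self_le_of_eigenbasis (hb : ∀ i, T (b i) = l i • b i) {x : E} {c : ℝ}
    (hc : ∀ i, ⟪b i, x⟫ ≠ 0 → l i ≤ c) : ⟪T x, x⟫ ≤ c * ‖x‖ ^ 2 := by
  rw [inner_map_self_eq_sum_of_eigenbasis hb, ← b.sum_sq_inner_right, Finset.mul_sum]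
  refine Finset.sum_le_sum fun i _ => ?_
  by_cases hi : ⟪b i, x⟫ = 0
  · simp [hi]
  · exact mul_le_mul_of_nonneg_right (hc i hi) (sq_nonneg _)

theorem le_inner_map_self_of_eigenbasis (hb : ∀ i, T (b i) = l i • b i) {x : E} {c : ℝ}
    (hc : ∀ i, ⟪b i, x⟫ ≠ 0 → c ≤ l i) : c * ‖x‖ ^ 2 ≤ ⟪T x, x⟫ := by
  rw [inner_map_self_eq_sum_of_eigenbasis hb, ← b.sum_sq_inner_right, Finset.mul_sum]
  refine Finset.sum_le_sum fun i _ => ?_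
  by_cases hi : ⟪b i, x⟫ = 0
  · simp [hi]
  · exact mul_le_mul_of_nonneg_right (hc i hi) (sq_nonneg _)

theorem map_eq_smul_of_inner_map_self_eq (hb : ∀ i, T (b i) = l i • b i) {x : E} {c : ℝ}
    (hc : ∀ i, ⟪b i, x⟫ ≠ 0 → l i ≤ c) (heq : ⟪T x, x⟫ = c * ‖x‖ ^ 2) : T x = c • x := by
  have hsum : ∑ i, (c - l i) * ⟪b i, x⟫ ^ 2 = 0 := by
    simp only [sub_mul, Finset.sum_sub_distrib, ← Finset.mul_sum, b.sum_sq_inner_right,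
      ← inner_map_self_eq_sum_of_eigenbasis hb, heq, sub_self]
  have hnonneg : ∀ i ∈ Finset.univ, 0 ≤ (c - l i) * ⟪b i, x⟫ ^ 2 := fun i _ => by
    by_cases hi : ⟪b i, x⟫ = 0
    · simp [hi]
    · exact mul_nonneg (sub_nonneg.mpr (hc i hi)) (sq_nonneg _)
  have hterm : ∀ i, l i * ⟪b i, x⟫ = c * ⟪b i, x⟫ := by
    intro i
    by_cases hi : ⟪b i, x⟫ = 0
    · simp [hi]
    have hi' := (Finset.sum_eq_zero_iff_of_nonneg hnonneg).mp hsum i (Finset.mem_univ i)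
    have hli : c - l i = 0 := by simpa [hi] using hi'
    rw [sub_eq_zero.mp hli]
  simp only [map_eq_sum_of_eigenbasis hb, hterm, ← smul_smul, ← Finset.smul_sum, b.sum_repr']

end Eigenbasis

section CourantFischer

variable {E : Type*} [NormedAddCommGroup E] [InnerProductSpace ℝ E]

theorem exists_ne_zero_forall_inner_eq_zero [FiniteDimensional ℝ E] (s : Finset E)
    (hs : s.card < Module.finrank ℝ E) : ∃ x ≠ 0, ∀ v ∈ s, ⟪v, x⟫ = 0 := by
  have hK : Submodule.span ℝ (s : Set E) ≠ ⊤ := fun hK => by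
    have := finrank_span_finset_le_card (R := ℝ) s
    rw [Set.finrank, hK, finrank_top] at this
    omega
  obtain ⟨x, hx, hx0⟩ := Submodule.exists_mem_ne_zero_of_ne_bot
    (mt Submodule.orthogonal_eq_bot_iff.mp hK)
  exact ⟨x, hx0, fun v hv => Submodule.inner_right_of_mem_orthogonal
    (Submodule.subset_span (Finset.mem_coe.mpr hv)) hx⟩

variable {N : ℕ}

theorem exists_ne_zero_orthogonal_Ioi_Iio (b b' : OrthonormalBasis (Fin N) ℝ E) (j : Fin N) :
    ∃ x ≠ 0, (∀ k, ⟪b k, x⟫ ≠ 0 → k ≤ j) ∧ (∀ k, ⟪b' k, x⟫ ≠ 0 → j ≤ k) := by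
  classical
  have hcard : ((Finset.Ioi j).image b ∪ (Finset.Iio j).image b').card < Module.finrank ℝ E := by
    calc _ ≤ (Finset.Ioi j).card + (Finset.Iio j).card :=
          (Finset.card_union_le _ _).trans (add_le_add Finset.card_image_le Finset.card_image_le)
      _ < N := by rw [Fin.card_Ioi, Fin.card_Iio]; omega
      _ = Module.finrank ℝ E := by simp [Module.finrank_eq_card_basis b.toBasis]
  have := b.toBasis.finiteDimensional_of_finite
  obtain ⟨x, hx0, hx⟩ := exists_ne_zero_forall_inner_eq_zero _ hcard
  refine ⟨x, hx0, fun k hk => ?_, fun k hk => ?_⟩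
  · by_contra! hjk
    exact hk (hx _ (Finset.mem_union_left _ (Finset.mem_image_of_mem b (Finset.mem_Ioi.mpr hjk))))
  · by_contra! hkj
    exact hk (hx _ (Finset.mem_union_right _ (Finset.mem_image_of_mem b' (Finset.mem_Iio.mpr hkj))))

variable {T T' : E →ₗ[ℝ] E} {b b' : OrthonormalBasis (Fin N) ℝ E} {l l' : Fin N → ℝ}

theorem eigenvalue_le_add_of_inner_map_self_le (hb : ∀ i, T (b i) = l i • b i)
    (hl : Monotone l) (hb' : ∀ i, T' (b' i) = l' i • b' i) (hl' : Monotone l') {c : ℝ}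
    (hTT' : ∀ x, ⟪T' x, x⟫ ≤ ⟪T x, x⟫ + c * ‖x‖ ^ 2) (j : Fin N) : l' j ≤ l j + c := by
  obtain ⟨x, hx0, hxb, hxb'⟩ := exists_ne_zero_orthogonal_Ioi_Iio b b' j
  have hx : 0 < ‖x‖ ^ 2 := by positivity
  have h' : l' j * ‖x‖ ^ 2 ≤ ⟪T' x, x⟫ :=
    le_inner_map_self_of_eigenbasis hb' fun k hk => hl' (hxb' k hk)
  have h : ⟪T x, x⟫ ≤ l j * ‖x‖ ^ 2 := inner_map_self_le_of_eigenbasis hb fun k hk => hl (hxb k hk)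
  nlinarith [hTT' x]

theorem eigenvalue_lt_of_inner_map_self_le (hb : ∀ i, T (b i) = l i • b i)
    (hl : Monotone l) (hb' : ∀ i, T' (b' i) = l' i • b' i) (hl' : Monotone l')
    (hTT' : ∀ x, ⟪T' x, x⟫ ≤ ⟪T x, x⟫)
    (hTT'_eigen : ∀ x (c : ℝ), x ≠ 0 → T x = c • x → ⟪T' x, x⟫ < ⟪T x, x⟫) (j : Fin N) :
    l' j < l j := by
  obtain ⟨x, hx0, hxb, hxb'⟩ := exists_ne_zero_orthogonal_Ioi_Iio b b' j
  have hx : 0 < ‖x‖ ^ 2 := by positivity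
  have h' : l' j * ‖x‖ ^ 2 ≤ ⟪T' x, x⟫ :=
    le_inner_map_self_of_eigenbasis hb' fun k hk => hl' (hxb' k hk)
  have h : ⟪T x, x⟫ ≤ l j * ‖x‖ ^ 2 := inner_map_self_le_of_eigenbasis hb fun k hk => hl (hxb k hk)
  by_contra! hll'
  have heq : ⟪T x, x⟫ = l j * ‖x‖ ^ 2 := by nlinarith [hTT' x]
  have hTx := map_eq_smul_of_inner_map_self_eq hb (fun k hk => hl (hxb k hk)) heq
  nlinarith [hTT'_eigen x _ hx0 hTx]

end CourantFischer

theorem Polynomial.roots_prod_univ_X_sub_C {R ι : Type*} [CommRing R] [IsDomain R] [Fintype ι]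
    (l : ι → R) : (∏ i, (X - C (l i))).roots = Finset.univ.val.map l := by
  rw [Finset.prod_eq_multiset_prod]
  have := roots_multiset_prod_X_sub_C (Finset.univ.val.map l)
  rwa [Multiset.map_map] at this

theorem Matrix.IsHermitian.exists_orthonormalBasis_of_charpoly_eq {N : ℕ}
    {S : Matrix (Fin N) (Fin N) ℝ} (hS : S.IsHermitian) {l : Fin N → ℝ} (hl : Monotone l)
    (hc : S.charpoly = ∏ i, (X - C (l i))) :
    ∃ b : OrthonormalBasis (Fin N) ℝ (EuclideanSpace ℝ (Fin N)),
      ∀ i, S.toEuclideanLin (b i) = l i • b i := by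
  have hT := isSymmetric_toEuclideanLin_iff.mpr hS
  have hn : Module.finrank ℝ (EuclideanSpace ℝ (Fin N)) = N := finrank_euclideanSpace_fin
  have hroots : Finset.univ.val.map l = Finset.univ.val.map (hT.eigenvalues hn) := by
    have hcT : S.toEuclideanLin.charpoly = S.charpoly := by
      rw [← S.charpoly_toLin (PiLp.basisFun 2 ℝ (Fin N))]
      rfl
    have := hT.roots_charpoly_eq_eigenvalues hn
    rw [hcT, hc, roots_prod_univ_X_sub_C] at this
    simpa using this
  -- Mathlib sorts the eigenvalues of a symmetric operator decreasingly.
  have hl_eq : l = hT.eigenvalues hn ∘ Fin.rev := by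
    refine List.ofFn_injective (List.Perm.eq_of_sortedLE hl.sortedLE_ofFn
      ((hT.eigenvalues_antitone hn).comp Fin.rev_anti).sortedLE_ofFn ?_)
    rw [← Multiset.coe_eq_coe, ← Fin.univ_val_map, ← Fin.univ_val_map, hroots,
      ← Multiset.map_map, show Fin.rev = ⇑(Fin.revPerm (n := N)) from rfl,
      Multiset.map_univ_val_equiv]
  refine ⟨(hT.eigenvectorBasis hn).reindex Fin.revPerm, fun i => ?_⟩
  simp [hl_eq]

theorem Matrix.inner_toEuclideanLin_mul_mul_transpose {ι κ : Type*} [Fintype ι] [DecidableEq ι]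
    [Fintype κ] (B : Matrix ι κ ℝ) (P : Matrix κ κ ℝ) (x : EuclideanSpace ℝ ι) :
    ⟪(B * P * Bᵀ).toEuclideanLin x, x⟫ = (Bᵀ *ᵥ x.ofLp) ⬝ᵥ (P *ᵥ (Bᵀ *ᵥ x.ofLp)) := by
  rw [EuclideanSpace.inner_eq_star_dotProduct, star_trivial, Matrix.ofLp_toLpLin,
    Matrix.toLin'_apply, ← mulVec_mulVec, ← mulVec_mulVec, dotProduct_mulVec, ← mulVec_transpose]

/-- If `A` is symmetric with distinct eigenvalues whose minimum gap exceeds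
`λ_max(BD⁻¹Bᵀ)`, `D ≻ 0`, and `Bᵀx ≠ 0` for every eigenvector `x` of `A`, then the
eigenvalues of `A` and of `A − BD⁻¹Bᵀ` strictly interlace, and those of
`A − BD⁻¹Bᵀ` are distinct. -/
theorem stmt18 (n m : ℕ) (A : Matrix (Fin (n + 1)) (Fin (n + 1)) ℝ)
    (B : Matrix (Fin (n + 1)) (Fin m) ℝ) (D : Matrix (Fin m) (Fin m) ℝ)
    (hA : A.IsSymm) (hD : D.PosDef)
    (lA lM lZ : Fin (n + 1) → ℝ)
    (hlA : StrictMono lA) (hlM : Monotone lM) (hlZ : Monotone lZ)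
    (hcA : A.charpoly = ∏ i, (X - Polynomial.C (lA i)))
    (hcM : (B * D⁻¹ * Bᵀ).charpoly = ∏ i, (X - Polynomial.C (lM i)))
    (hcZ : (A - B * D⁻¹ * Bᵀ).charpoly = ∏ i, (X - Polynomial.C (lZ i)))
    (hgap : ∀ i : Fin n, lM (Fin.last n) < lA i.succ - lA i.castSucc)
    (hctrl : ∀ (x : Fin (n + 1) → ℝ) (c : ℝ),
      x ≠ 0 → A.mulVec x = c • x → Bᵀ.mulVec x ≠ 0) :
    (∀ i : Fin n, lZ i.castSucc < lA i.castSucc ∧ lA i.castSucc < lZ i.succ) ∧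
      lZ (Fin.last n) < lA (Fin.last n) ∧ StrictMono lZ := by
  set M := B * D⁻¹ * Bᵀ
  have hAH : A.IsHermitian := hA
  have hMH : M.IsHermitian := isHermitian_mul_mul_conjTranspose B hD.inv.isHermitian
  obtain ⟨bA, hbA⟩ := hAH.exists_orthonormalBasis_of_charpoly_eq hlA.monotone hcA
  obtain ⟨bM, hbM⟩ := hMH.exists_orthonormalBasis_of_charpoly_eq hlM hcM
  obtain ⟨bZ, hbZ⟩ := (hAH.sub hMH).exists_orthonormalBasis_of_charpoly_eq hlZ hcZ
  have hZ : ∀ x, ⟪(A - M).toEuclideanLin x, x⟫ =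
      ⟪A.toEuclideanLin x, x⟫ - ⟪M.toEuclideanLin x, x⟫ := fun x => by
    rw [map_sub, LinearMap.sub_apply, inner_sub_left]
  have hM_nonneg : ∀ x, 0 ≤ ⟪M.toEuclideanLin x, x⟫ := fun x => by
    rw [inner_toEuclideanLin_mul_mul_transpose]
    simpa using hD.inv.posSemidef.dotProduct_mulVec_nonneg (Bᵀ *ᵥ x.ofLp)
  have hM_le : ∀ x, ⟪M.toEuclideanLin x, x⟫ ≤ lM (Fin.last n) * ‖x‖ ^ 2 := fun x =>
    inner_map_self_le_of_eigenbasis hbM fun k _ => hlM (Fin.le_last k)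
  have hM_pos : ∀ x (c : ℝ), x ≠ 0 → A.toEuclideanLin x = c • x →
      0 < ⟪M.toEuclideanLin x, x⟫ := by
    intro x c hx hAx
    have hBx : Bᵀ *ᵥ x.ofLp ≠ 0 :=
      hctrl x.ofLp c (by simpa using hx) (by simpa using congrArg WithLp.ofLp hAx)
    rw [inner_toEuclideanLin_mul_mul_transpose]
    simpa only [star_trivial] using hD.inv.dotProduct_mulVec_pos hBx
  have upper : ∀ j, lZ j < lA j :=
    eigenvalue_lt_of_inner_map_self_le hbA hlA.monotone hbZ hlZ
      (fun x => by linarith [hZ x, hM_nonneg x])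
      (fun x c hx hAx => by linarith [hZ x, hM_pos x c hx hAx])
  have lower : ∀ j, lA j ≤ lZ j + lM (Fin.last n) :=
    eigenvalue_le_add_of_inner_map_self_le hbZ hlZ hbA hlA.monotone
      (fun x => by linarith [hZ x, hM_le x])
  have interlace : ∀ i : Fin n, lA i.castSucc < lZ i.succ := fun i => by
    linarith [hgap i, lower i.succ]
  exact ⟨fun i => ⟨upper _, interlace i⟩, upper _,
    Fin.strictMono_iff_lt_succ.mpr fun i => (upper _).trans (interlace i)⟩
end
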